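/- Consider a database D, a canonical set Σ of FDs with an LHS chain, and an SJFCQ Q. Let R(z̄) be an atom of Q, and let E be a set of R-facts such that (1) the single-atom query {R(z̄)} is not entailed by E, and (2) for every f ∈ E and every R-fact g ∈ D there is a primary-lhs position (R,A) of R(z̄) with f[A] ≠ g[A]. Then rfreq(Q, D ∪ E, Σ) = rfreq(Q, D, Σ) × (|rep(D, Σ)| / |rep(D \ D_conf^{Σ,Q}, Σ)|) × (|rep((D ∪ E) \ (D_conf^{Σ,Q} ∪ E_conf^{Σ,Q}), Σ)| / |rep(D ∪ E, Σ)|). -/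

import Mathlib

open scoped Classical

/-- A fact over relation name `rel`, assigning a constant to each attribute. -/
structure DBFact (Rel Attr Const : Type*) where
  rel : Rel
  val : Attr → Const

/-- A functional dependency `rel : lhs → rhs`. -/
structure DBFD (Rel Attr : Type*) where
  rel : Rel
  lhs : Set Attr
  rhs : Set Attr

/-- A term of a conjunctive query: a variable or a constant. -/
inductive DBTerm (Var Const : Type*) where
  | var : Var → DBTerm Var Const
  | const : Const → DBTerm Var Const

/-- An atom of a conjunctive query. -/
structure DBAtom (Rel Attr Var Const : Type*) where
  rel : Rel
  val : Attr → DBTerm Var Const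

variable {Rel Attr Var Const : Type*}

/-- A database satisfies a single FD. -/
def satFD (D : Finset (DBFact Rel Attr Const)) (φ : DBFD Rel Attr) : Prop :=
  ∀ f ∈ D, ∀ g ∈ D, f.rel = φ.rel → g.rel = φ.rel →
    (∀ A ∈ φ.lhs, f.val A = g.val A) → ∀ A ∈ φ.rhs, f.val A = g.val A

/-- A database satisfies a set of FDs. -/
def satFDs (D : Finset (DBFact Rel Attr Const)) (S : Set (DBFD Rel Attr)) : Prop :=
  ∀ φ ∈ S, satFD D φ

/-- `E` is a repair of `D` w.r.t. `S`: an inclusion-maximal consistent subset of `D`. -/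
def isRepair (S : Set (DBFD Rel Attr)) (D E : Finset (DBFact Rel Attr Const)) : Prop :=
  E ⊆ D ∧ satFDs E S ∧ ∀ F, E ⊆ F → F ⊆ D → satFDs F S → F = E

/-- The set of repairs of `D` w.r.t. `S`. -/
noncomputable def rep (D : Finset (DBFact Rel Attr Const)) (S : Set (DBFD Rel Attr)) :
    Finset (Finset (DBFact Rel Attr Const)) :=
  D.powerset.filter (fun E => isRepair S D E)

/-- Applying a homomorphism (a map from variables to constants) to an atom yields a fact. -/
def applyHom (h : Var → Const) (α : DBAtom Rel Attr Var Const) : DBFact Rel Attr Const :=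
  ⟨α.rel, fun A => match α.val A with
    | DBTerm.var v => h v
    | DBTerm.const c => c⟩

/-- `D ⊨ Q`: there is a homomorphism from the CQ `Q` into `D`. -/
def entails (D : Finset (DBFact Rel Attr Const)) (Q : Finset (DBAtom Rel Attr Var Const)) :
    Prop :=
  ∃ h : Var → Const, ∀ α ∈ Q, applyHom h α ∈ D

/-- The repairs of `D` w.r.t. `S` that entail `Q`. -/
noncomputable def repQ (D : Finset (DBFact Rel Attr Const)) (S : Set (DBFD Rel Attr))
    (Q : Finset (DBAtom Rel Attr Var Const)) : Finset (Finset (DBFact Rel Attr Const)) :=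
  (rep D S).filter (fun E => entails E Q)

/-- The relative frequency of `Q` w.r.t. `D` and `S`. -/
noncomputable def rfreq (Q : Finset (DBAtom Rel Attr Var Const))
    (D : Finset (DBFact Rel Attr Const)) (S : Set (DBFD Rel Attr)) : ℚ :=
  ((repQ D S Q).card : ℚ) / ((rep D S).card : ℚ)

/-- `Q` is self-join-free: no relation name occurs in two distinct atoms. -/
def sjf (Q : Finset (DBAtom Rel Attr Var Const)) : Prop :=
  ∀ α ∈ Q, ∀ β ∈ Q, α.rel = β.rel → α = β

/-- A canonical set of FDs with an LHS chain, given by the chain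
`R : X₁ → Y₁, …, R : Xₙ → Yₙ` for each relation name `R`, with
`X₁ ⊊ X₂ ⊊ ⋯ ⊊ Xₙ`, each `Y_i` nonempty, `X_i ∩ Y_j = ∅` for all `i,j`,
and `Y_i ∩ Y_j = ∅` for `i ≠ j`. -/
def canonicalChain (chain : Rel → List (Set Attr × Set Attr)) : Prop :=
  ∀ R : Rel,
    ((chain R).Pairwise fun a b => a.1 ⊂ b.1) ∧
    (∀ xy ∈ chain R, (xy.2 : Set Attr).Nonempty) ∧
    (∀ xy ∈ chain R, ∀ xy' ∈ chain R, xy.1 ∩ xy'.2 = ∅) ∧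
    ((chain R).Pairwise fun a b => a.2 ∩ b.2 = ∅)

/-- The set of FDs induced by a chain. -/
def chainFDs (chain : Rel → List (Set Attr × Set Attr)) : Set (DBFD Rel Attr) :=
  {φ | ∃ xy ∈ chain φ.rel, φ.lhs = xy.1 ∧ φ.rhs = xy.2}

/-- The `i`-th FD of the chain `L` has some attribute carrying a variable in atom `α`. -/
def chainVarAt (L : List (Set Attr × Set Attr)) (α : DBAtom Rel Attr Var Const) (i : ℕ) :
    Prop :=
  ∃ xy, L[i]? = some xy ∧ ∃ A ∈ xy.1 ∪ xy.2, ∃ v, α.val A = DBTerm.var v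

/-- The index of the primary FD of the chain `L` w.r.t. the atom `α` (if it exists):
the first FD some of whose attributes carries a variable in `α`. -/
noncomputable def primaryIdx (L : List (Set Attr × Set Attr))
    (α : DBAtom Rel Attr Var Const) : Option ℕ :=
  if h : ∃ i, chainVarAt L α i then some (Nat.find h) else none

/-- The primary FD of the chain `L` w.r.t. the atom `α` (if it exists). -/
noncomputable def primaryFD (L : List (Set Attr × Set Attr))
    (α : DBAtom Rel Attr Var Const) : Option (Set Attr × Set Attr) :=
  (primaryIdx L α).bind fun i => L[i]?

/-- The primary prefix of the chain `L` w.r.t. the atom `α`: the FDs strictly before the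
primary FD, or the whole chain if there is no primary FD. -/
noncomputable def primaryPrefix (L : List (Set Attr × Set Attr))
    (α : DBAtom Rel Attr Var Const) : List (Set Attr × Set Attr) :=
  L.take ((primaryIdx L α).getD L.length)

/-- The primary-lhs positions (attributes) of the atom `α` w.r.t. the chain `L`. -/
noncomputable def primaryLhs (L : List (Set Attr × Set Attr))
    (α : DBAtom Rel Attr Var Const) : Set Attr :=
  match primaryFD L α with
  | some xy => xy.1
  | none => Set.univ

/-- The variables of `α` occurring at primary-lhs positions. -/
noncomputable def pvar (L : List (Set Attr × Set Attr))
    (α : DBAtom Rel Attr Var Const) : Set Var :=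
  {v | ∃ A ∈ primaryLhs L α, α.val A = DBTerm.var v}

/-- A liaison variable of `Q`: a variable with more than one occurrence in `Q`. -/
def liaison (Q : Finset (DBAtom Rel Attr Var Const)) (v : Var) : Prop :=
  ∃ α ∈ Q, ∃ β ∈ Q, ∃ A B, α.val A = DBTerm.var v ∧ β.val B = DBTerm.var v ∧
    (α ≠ β ∨ A ≠ B)

/-- The complex part `comp(Q,Σ)` of `Q` w.r.t. the chain. -/
noncomputable def compPart (chain : Rel → List (Set Attr × Set Attr))
    (Q : Finset (DBAtom Rel Attr Var Const)) : Finset (DBAtom Rel Attr Var Const) :=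
  Q.filter fun α => ∃ A, A ∉ primaryLhs (chain α.rel) α ∧
    ((∃ c, α.val A = DBTerm.const c) ∨ ∃ v, α.val A = DBTerm.var v ∧ liaison Q v) ∧
    ∀ xy ∈ primaryPrefix (chain α.rel) α, A ∉ xy.1 ∪ xy.2

/-- The fact `f` agrees with the atom `α` at attribute `A`, i.e. `α[A]` is the
constant `f[A]`. -/
def agreesAt (f : DBFact Rel Attr Const) (α : DBAtom Rel Attr Var Const) (A : Attr) : Prop :=
  α.val A = DBTerm.const (f.val A)

/-- `D_conf^{Σ,Q}`: the facts of `D` conflicting with `Q` via an FD of the primary prefix. -/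
noncomputable def dconf (chain : Rel → List (Set Attr × Set Attr))
    (Q : Finset (DBAtom Rel Attr Var Const)) (D : Finset (DBFact Rel Attr Const)) :
    Finset (DBFact Rel Attr Const) :=
  D.filter fun f => ∃ α ∈ Q, α.rel = f.rel ∧
    ∃ xy ∈ primaryPrefix (chain α.rel) α,
      (∀ A ∈ xy.1, agreesAt f α A) ∧ ∃ B ∈ xy.2, ¬ agreesAt f α B

/-- `D_ind^{Σ,Q}`: the facts of `D \ D_conf^{Σ,Q}` disagreeing with `Q` on the lhs of an
FD of the primary prefix. -/
noncomputable def dind (chain : Rel → List (Set Attr × Set Attr))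
    (Q : Finset (DBAtom Rel Attr Var Const)) (D : Finset (DBFact Rel Attr Const)) :
    Finset (DBFact Rel Attr Const) :=
  (D \ dconf chain Q D).filter fun f => ∃ α ∈ Q, α.rel = f.rel ∧
    ∃ xy ∈ primaryPrefix (chain α.rel) α, ∃ A ∈ xy.1, ¬ agreesAt f α A

/-- The active domain of `D`: the constants occurring in `D`. -/
noncomputable def adom [Fintype Attr] (D : Finset (DBFact Rel Attr Const)) : Finset Const :=
  D.biUnion fun f => Finset.univ.image f.val

/-- Substituting a constant for a variable in a term. -/
noncomputable def substTerm (x : Var) (c : Const) : DBTerm Var Const → DBTerm Var Const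
  | DBTerm.var v => if v = x then DBTerm.const c else DBTerm.var v
  | DBTerm.const d => DBTerm.const d

/-- Substituting a constant for a variable in an atom. -/
noncomputable def substAtom (x : Var) (c : Const) (α : DBAtom Rel Attr Var Const) :
    DBAtom Rel Attr Var Const :=
  ⟨α.rel, fun A => substTerm x c (α.val A)⟩

/-- `Q_{x↦c}`: the query obtained from `Q` by replacing the variable `x` with `c`. -/
noncomputable def substQ (x : Var) (c : Const) (Q : Finset (DBAtom Rel Attr Var Const)) :
    Finset (DBAtom Rel Attr Var Const) :=
  Q.image (substAtom x c)

/-- The variables occurring in `Q`. -/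
def qvars (Q : Finset (DBAtom Rel Attr Var Const)) : Set Var :=
  {v | ∃ α ∈ Q, ∃ A, α.val A = DBTerm.var v}

/-- `S` has an LHS chain: the left-hand sides of FDs over the same relation are
⊆-comparable. -/
def hasLHSChain (S : Set (DBFD Rel Attr)) : Prop :=
  ∀ φ ∈ S, ∀ ψ ∈ S, φ.rel = ψ.rel → φ.lhs ⊆ ψ.lhs ∨ ψ.lhs ⊆ φ.lhs


section Aux
variable {Rel Attr Var Const : Type*}

lemma satFDs_mono {r s : Finset (DBFact Rel Attr Const)} {S : Set (DBFD Rel Attr)}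
    (hrs : r ⊆ s) (hs : satFDs s S) : satFDs r S :=
  fun φ hφ f hf g hg => hs φ hφ f (hrs hf) g (hrs hg)

lemma satFDs_empty {S : Set (DBFD Rel Attr)} :
    satFDs (∅ : Finset (DBFact Rel Attr Const)) S := by
  intro φ _ f hf
  exact absurd hf (Finset.notMem_empty f)

lemma mem_rep_iff {F r : Finset (DBFact Rel Attr Const)} {S : Set (DBFD Rel Attr)} :
    r ∈ rep F S ↔ r ⊆ F ∧ satFDs r S ∧ ∀ T, r ⊆ T → T ⊆ F → satFDs T S → T = r := by
  simp only [rep, Finset.mem_filter, Finset.mem_powerset]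
  unfold isRepair
  tauto

lemma rep_nonempty (F : Finset (DBFact Rel Attr Const)) (S : Set (DBFD Rel Attr)) :
    (rep F S).Nonempty := by
  classical
  have hne : (F.powerset.filter (fun T => satFDs T S)).Nonempty := by
    refine ⟨∅, ?_⟩
    simp [satFDs_empty]
  obtain ⟨b, hb, hmax⟩ := Finset.exists_max_image _ Finset.card hne
  simp only [Finset.mem_filter, Finset.mem_powerset] at hb
  refine ⟨b, mem_rep_iff.2 ⟨hb.1, hb.2, fun T hbT hTF hT => ?_⟩⟩
  have hT' : T ∈ F.powerset.filter (fun T => satFDs T S) := by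
    simp [Finset.mem_powerset, hTF, hT]
  exact (Finset.eq_of_subset_of_card_le hbT (hmax T hT')).symm

lemma rep_card_pos (F : Finset (DBFact Rel Attr Const)) (S : Set (DBFD Rel Attr)) :
    0 < (rep F S).card := Finset.card_pos.2 (rep_nonempty F S)

lemma entails_mono {r s : Finset (DBFact Rel Attr Const)}
    {Q : Finset (DBAtom Rel Attr Var Const)} (hrs : r ⊆ s) (h : entails r Q) :
    entails s Q := by
  obtain ⟨h0, hh⟩ := h
  exact ⟨h0, fun β hβ => hrs (hh β hβ)⟩

/-- Union of consistent sets with no cross conflicts is consistent. -/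
lemma satFDs_union {u v G H : Finset (DBFact Rel Attr Const)} {S : Set (DBFD Rel Attr)}
    (hu : satFDs u S) (hv : satFDs v S) (huG : u ⊆ G) (hvH : v ⊆ H)
    (hc : ∀ φ ∈ S, ∀ f ∈ G, ∀ g ∈ H, f.rel = φ.rel → g.rel = φ.rel →
      (∀ A ∈ φ.lhs, f.val A = g.val A) → ∀ A ∈ φ.rhs, f.val A = g.val A) :
    satFDs (u ∪ v) S := by
  intro φ hφ f hf g hg hfr hgr hlhs
  rcases Finset.mem_union.1 hf with hf | hf <;> rcases Finset.mem_union.1 hg with hg | hg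
  · exact hu φ hφ f hf g hg hfr hgr hlhs
  · exact hc φ hφ f (huG hf) g (hvH hg) hfr hgr hlhs
  · intro A hA
    exact (hc φ hφ g (huG hg) f (hvH hf) hgr hfr (fun B hB => (hlhs B hB).symm) A hA).symm
  · exact hv φ hφ f hf g hg hfr hgr hlhs

end Aux
section Prod
variable {Rel Attr Var Const : Type*}
variable {S : Set (DBFD Rel Attr)} {G H : Finset (DBFact Rel Attr Const)}

/-- The cross-compatibility condition between `G` and `H`. -/
def crossOK (S : Set (DBFD Rel Attr)) (G H : Finset (DBFact Rel Attr Const)) : Prop :=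
  ∀ φ ∈ S, ∀ f ∈ G, ∀ g ∈ H, f.rel = φ.rel → g.rel = φ.rel →
    (∀ A ∈ φ.lhs, f.val A = g.val A) → ∀ A ∈ φ.rhs, f.val A = g.val A

lemma rep_inter_left (hc : crossOK S G H) {r : Finset (DBFact Rel Attr Const)}
    (hr : r ∈ rep (G ∪ H) S) : r ∩ G ∈ rep G S := by
  obtain ⟨hrsub, hrsat, hrmax⟩ := mem_rep_iff.1 hr
  refine mem_rep_iff.2 ⟨Finset.inter_subset_right, satFDs_mono Finset.inter_subset_left hrsat,
    fun T hT1 hT2 hT3 => ?_⟩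
  have hsat : satFDs (T ∪ r ∩ H) S :=
    satFDs_union hT3 (satFDs_mono Finset.inter_subset_left hrsat) hT2
      Finset.inter_subset_right hc
  have hrT : r ⊆ T ∪ r ∩ H := by
    intro x hx
    rcases Finset.mem_union.1 (hrsub hx) with h | h
    · exact Finset.mem_union_left _ (hT1 (Finset.mem_inter.2 ⟨hx, h⟩))
    · exact Finset.mem_union_right _ (Finset.mem_inter.2 ⟨hx, h⟩)
  have heq : T ∪ r ∩ H = r := hrmax _ hrT
    (Finset.union_subset (hT2.trans Finset.subset_union_left)
      (Finset.inter_subset_left.trans hrsub)) hsat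
  refine Finset.Subset.antisymm (fun x hx => Finset.mem_inter.2 ⟨?_, hT2 hx⟩) hT1
  exact heq ▸ Finset.mem_union_left _ hx

lemma rep_inter_right (hc : crossOK S G H) {r : Finset (DBFact Rel Attr Const)}
    (hr : r ∈ rep (G ∪ H) S) : r ∩ H ∈ rep H S := by
  obtain ⟨hrsub, hrsat, hrmax⟩ := mem_rep_iff.1 hr
  refine mem_rep_iff.2 ⟨Finset.inter_subset_right, satFDs_mono Finset.inter_subset_left hrsat,
    fun T hT1 hT2 hT3 => ?_⟩
  have hsat : satFDs (r ∩ G ∪ T) S :=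
    satFDs_union (satFDs_mono Finset.inter_subset_left hrsat) hT3
      Finset.inter_subset_right hT2 hc
  have hrT : r ⊆ r ∩ G ∪ T := by
    intro x hx
    rcases Finset.mem_union.1 (hrsub hx) with h | h
    · exact Finset.mem_union_left _ (Finset.mem_inter.2 ⟨hx, h⟩)
    · exact Finset.mem_union_right _ (hT1 (Finset.mem_inter.2 ⟨hx, h⟩))
  have heq : r ∩ G ∪ T = r := hrmax _ hrT
    (Finset.union_subset (Finset.inter_subset_left.trans hrsub)
      (hT2.trans Finset.subset_union_right)) hsat
  refine Finset.Subset.antisymm (fun x hx => Finset.mem_inter.2 ⟨?_, hT2 hx⟩) hT1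
  exact heq ▸ Finset.mem_union_right _ hx

lemma rep_union_mem (hc : crossOK S G H) {u v : Finset (DBFact Rel Attr Const)}
    (hu : u ∈ rep G S) (hv : v ∈ rep H S) : u ∪ v ∈ rep (G ∪ H) S := by
  obtain ⟨hu1, hu2, hu3⟩ := mem_rep_iff.1 hu
  obtain ⟨hv1, hv2, hv3⟩ := mem_rep_iff.1 hv
  refine mem_rep_iff.2 ⟨Finset.union_subset_union hu1 hv1,
    satFDs_union hu2 hv2 hu1 hv1 hc, fun T hT1 hT2 hT3 => ?_⟩
  have hTG : T ∩ G = u := hu3 _ (fun x hx => Finset.mem_inter.2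
      ⟨hT1 (Finset.mem_union_left _ hx), hu1 hx⟩)
    Finset.inter_subset_right (satFDs_mono Finset.inter_subset_left hT3)
  have hTH : T ∩ H = v := hv3 _ (fun x hx => Finset.mem_inter.2
      ⟨hT1 (Finset.mem_union_right _ hx), hv1 hx⟩)
    Finset.inter_subset_right (satFDs_mono Finset.inter_subset_left hT3)
  have : T = T ∩ G ∪ T ∩ H := by
    rw [← Finset.inter_union_distrib_left]
    exact (Finset.inter_eq_left.2 hT2).symm
  rw [this, hTG, hTH]

/-- Product decomposition of repairs, with a predicate depending only on the `G`-part. -/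
lemma rep_prod_filter (hdisj : Disjoint G H) (hc : crossOK S G H)
    (P : Finset (DBFact Rel Attr Const) → Prop)
    (hP : ∀ r ∈ rep (G ∪ H) S, (P r ↔ P (r ∩ G))) :
    ((rep (G ∪ H) S).filter P).card = ((rep G S).filter P).card * (rep H S).card := by
  classical
  rw [← Finset.card_product]
  refine Finset.card_bij' (fun r _ => (r ∩ G, r ∩ H)) (fun p _ => p.1 ∪ p.2) ?_ ?_ ?_ ?_
  · intro r hr
    obtain ⟨hr1, hr2⟩ := Finset.mem_filter.1 hr
    refine Finset.mem_product.2 ⟨Finset.mem_filter.2 ⟨rep_inter_left hc hr1, ?_⟩,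
      rep_inter_right hc hr1⟩
    exact (hP r hr1).1 hr2
  · intro p hp
    obtain ⟨hp1, hp2⟩ := Finset.mem_product.1 hp
    obtain ⟨hp1, hp1P⟩ := Finset.mem_filter.1 hp1
    have hmem := rep_union_mem hc hp1 hp2
    refine Finset.mem_filter.2 ⟨hmem, (hP _ hmem).2 ?_⟩
    have h1 : p.1 ⊆ G := (mem_rep_iff.1 hp1).1
    have h2 : p.2 ⊆ H := (mem_rep_iff.1 hp2).1
    have : (p.1 ∪ p.2) ∩ G = p.1 := by
      ext x
      simp only [Finset.mem_inter, Finset.mem_union]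
      constructor
      · rintro ⟨h | h, hxG⟩
        · exact h
        · exact (Finset.disjoint_left.1 hdisj hxG (h2 h)).elim
      · intro hx; exact ⟨Or.inl hx, h1 hx⟩
    rw [this]; exact hp1P
  · intro r hr
    obtain ⟨hr1, _⟩ := Finset.mem_filter.1 hr
    show r ∩ G ∪ r ∩ H = r
    have hsub := (mem_rep_iff.1 hr1).1
    ext x
    simp only [Finset.mem_union, Finset.mem_inter]
    constructor
    · rintro (⟨h, _⟩ | ⟨h, _⟩) <;> exact h
    · intro hx
      rcases Finset.mem_union.1 (hsub hx) with h | h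
      · exact Or.inl ⟨hx, h⟩
      · exact Or.inr ⟨hx, h⟩
  · intro p hp
    obtain ⟨hp1, hp2⟩ := Finset.mem_product.1 hp
    obtain ⟨hp1, _⟩ := Finset.mem_filter.1 hp1
    have h1 : p.1 ⊆ G := (mem_rep_iff.1 hp1).1
    have h2 : p.2 ⊆ H := (mem_rep_iff.1 hp2).1
    have hG : (p.1 ∪ p.2) ∩ G = p.1 := by
      ext x
      simp only [Finset.mem_inter, Finset.mem_union]
      constructor
      · rintro ⟨h | h, hxG⟩
        · exact h
        · exact (Finset.disjoint_left.1 hdisj hxG (h2 h)).elim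
      · intro hx; exact ⟨Or.inl hx, h1 hx⟩
    have hH : (p.1 ∪ p.2) ∩ H = p.2 := by
      ext x
      simp only [Finset.mem_inter, Finset.mem_union]
      constructor
      · rintro ⟨h | h, hxH⟩
        · exact (Finset.disjoint_left.1 hdisj (h1 h) hxH).elim
        · exact h
      · intro hx; exact ⟨Or.inr hx, h2 hx⟩
    show ((p.1 ∪ p.2) ∩ G, (p.1 ∪ p.2) ∩ H) = p
    rw [hG, hH]

lemma rep_prod_card (hdisj : Disjoint G H) (hc : crossOK S G H) :
    (rep (G ∪ H) S).card = (rep G S).card * (rep H S).card := by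
  classical
  have := rep_prod_filter hdisj hc (fun _ => True) (fun _ _ => Iff.rfl)
  simpa using this

end Prod
section Conf
variable {Rel Attr Var Const : Type*}

/-- The conflict predicate underlying `dconf`. -/
def confP (chain : Rel → List (Set Attr × Set Attr)) (Q : Finset (DBAtom Rel Attr Var Const))
    (f : DBFact Rel Attr Const) : Prop :=
  ∃ β ∈ Q, β.rel = f.rel ∧ ∃ xy ∈ primaryPrefix (chain β.rel) β,
    (∀ A ∈ xy.1, agreesAt f β A) ∧ ∃ B ∈ xy.2, ¬ agreesAt f β B

lemma mem_dconf {chain : Rel → List (Set Attr × Set Attr)}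
    {Q : Finset (DBAtom Rel Attr Var Const)} {D : Finset (DBFact Rel Attr Const)}
    {f : DBFact Rel Attr Const} :
    f ∈ dconf chain Q D ↔ f ∈ D ∧ confP chain Q f := by
  simp [dconf, confP, Finset.mem_filter]

lemma dconf_union {chain : Rel → List (Set Attr × Set Attr)}
    {Q : Finset (DBAtom Rel Attr Var Const)} {D E : Finset (DBFact Rel Attr Const)} :
    dconf chain Q (D ∪ E) = dconf chain Q D ∪ dconf chain Q E :=
  Finset.filter_union _ _ _

lemma not_chainVarAt_of_lt_prefixLen {L : List (Set Attr × Set Attr)}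
    {β : DBAtom Rel Attr Var Const} {j : ℕ}
    (hj : j < (primaryIdx L β).getD L.length) : ¬ chainVarAt L β j := by
  unfold primaryIdx at hj
  split at hj
  · next h => exact Nat.find_min h (by simpa using hj)
  · next h => exact fun hc => h ⟨j, hc⟩

/-- Every position of an FD of the primary prefix carries a constant. -/
lemma prefix_const {L : List (Set Attr × Set Attr)} {β : DBAtom Rel Attr Var Const}
    {xy : Set Attr × Set Attr} (hxy : xy ∈ primaryPrefix L β) :
    ∀ A ∈ xy.1 ∪ xy.2, ∃ c, β.val A = DBTerm.const c := by
  intro A hA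
  unfold primaryPrefix at hxy
  obtain ⟨j, hjlen, hjeq⟩ := List.mem_iff_getElem.1 hxy
  have hjk : j < (primaryIdx L β).getD L.length := lt_of_lt_of_le hjlen (by
    simpa using (List.length_take _ _).le.trans (min_le_left _ _))
  have hjL : j < L.length := lt_of_lt_of_le hjlen (by simp [List.length_take])
  have hget : L[j] = xy := by rw [← hjeq]; exact (List.getElem_take).symm
  have hnot := not_chainVarAt_of_lt_prefixLen (β := β) hjk
  cases hterm : β.val A with
  | const c => exact ⟨c, rfl⟩
  | var v =>
    exact absurd ⟨L[j], List.getElem?_eq_getElem hjL, A, hget ▸ hA, v, hterm⟩ hnot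

lemma mem_of_mem_primaryPrefix {L : List (Set Attr × Set Attr)}
    {β : DBAtom Rel Attr Var Const} {xy : Set Attr × Set Attr}
    (hxy : xy ∈ primaryPrefix L β) : xy ∈ L :=
  List.take_subset _ _ hxy

/-- In a consistent set containing the images of a homomorphism for `Q`, no fact is
conflicting. -/
lemma hom_no_conf {chain : Rel → List (Set Attr × Set Attr)}
    {Q : Finset (DBAtom Rel Attr Var Const)} {T : Finset (DBFact Rel Attr Const)}
    (hsat : satFDs T (chainFDs chain)) {h : Var → Const}
    (hhom : ∀ β ∈ Q, applyHom h β ∈ T) {g : DBFact Rel Attr Const} (hg : g ∈ T)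
    (hc : confP chain Q g) : False := by
  obtain ⟨β, hβ, hrel, xy, hxy, hX, B, hB, hnB⟩ := hc
  set f := applyHom h β with hf
  have hfT : f ∈ T := hhom β hβ
  have hφ : (⟨β.rel, xy.1, xy.2⟩ : DBFD Rel Attr) ∈ chainFDs chain :=
    ⟨xy, mem_of_mem_primaryPrefix hxy, rfl, rfl⟩
  have hlhs : ∀ A ∈ xy.1, f.val A = g.val A := by
    intro A hA
    have := hX A hA
    unfold agreesAt at this
    simp [hf, applyHom, this]
  have hrhs := hsat _ hφ f hfT g hg rfl hrel.symm hlhs B hB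
  obtain ⟨c, hcB⟩ := prefix_const hxy B (Set.mem_union_right _ hB)
  have hfB : f.val B = c := by simp [hf, applyHom, hcB]
  apply hnB
  unfold agreesAt
  rw [hcB, ← hrhs, hfB]

/-- Key lemma: the repairs entailing `Q` are unchanged by removing conflicting facts. -/
lemma repQ_sdiff (chain : Rel → List (Set Attr × Set Attr))
    (Q : Finset (DBAtom Rel Attr Var Const)) (F : Finset (DBFact Rel Attr Const)) :
    repQ F (chainFDs chain) Q = repQ (F \ dconf chain Q F) (chainFDs chain) Q := by
  ext r
  simp only [repQ, Finset.mem_filter]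
  constructor
  · rintro ⟨hr, hent⟩
    obtain ⟨hsub, hsat, hmax⟩ := mem_rep_iff.1 hr
    obtain ⟨h, hhom⟩ := hent
    have hsub' : r ⊆ F \ dconf chain Q F := by
      intro x hx
      refine Finset.mem_sdiff.2 ⟨hsub hx, fun hxc => ?_⟩
      exact hom_no_conf hsat hhom hx (mem_dconf.1 hxc).2
    exact ⟨mem_rep_iff.2 ⟨hsub', hsat, fun T hT1 hT2 hT3 =>
      hmax T hT1 (hT2.trans (Finset.sdiff_subset)) hT3⟩, h, hhom⟩
  · rintro ⟨hr, hent⟩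
    obtain ⟨hsub, hsat, hmax⟩ := mem_rep_iff.1 hr
    obtain ⟨h, hhom⟩ := hent
    refine ⟨mem_rep_iff.2 ⟨hsub.trans Finset.sdiff_subset, hsat, fun T hT1 hT2 hT3 => ?_⟩,
      h, hhom⟩
    have hT' : T ⊆ F \ dconf chain Q F := by
      intro x hx
      refine Finset.mem_sdiff.2 ⟨hT2 hx, fun hxc => ?_⟩
      exact hom_no_conf hT3 (fun β hβ => hT1 (hhom β hβ)) hx (mem_dconf.1 hxc).2
    exact hmax T hT1 hT' hT3

end Conf
section Compat
variable {Rel Attr Var Const : Type*}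

/-- A fact is "off the α-path": it disagrees with `α` at some position of a prefix FD. -/
def offP (chain : Rel → List (Set Attr × Set Attr)) (α : DBAtom Rel Attr Var Const)
    (f : DBFact Rel Attr Const) : Prop :=
  f.rel = α.rel ∧ ∃ xy ∈ primaryPrefix (chain α.rel) α, ∃ A ∈ xy.1 ∪ xy.2, ¬ agreesAt f α A

lemma mem_prefix_idx {L : List (Set Attr × Set Attr)} {β : DBAtom Rel Attr Var Const}
    {xy : Set Attr × Set Attr} (h : xy ∈ primaryPrefix L β) :
    ∃ j, j < (primaryIdx L β).getD L.length ∧ ∃ (hj : j < L.length), L[j] = xy := by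
  unfold primaryPrefix at h
  obtain ⟨j, hjlen, hjeq⟩ := List.mem_iff_getElem.1 h
  have hjk : j < (primaryIdx L β).getD L.length :=
    lt_of_lt_of_le hjlen (by simp [List.length_take])
  have hjL : j < L.length := lt_of_lt_of_le hjlen (by simp [List.length_take])
  exact ⟨j, hjk, hjL, by rw [← hjeq]; exact (List.getElem_take).symm⟩

lemma idx_prefix_idx {L : List (Set Attr × Set Attr)} {β : DBAtom Rel Attr Var Const}
    {j : ℕ} (hjk : j < (primaryIdx L β).getD L.length) (hjL : j < L.length) :
    L[j] ∈ primaryPrefix L β := by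
  unfold primaryPrefix
  have : (L.take ((primaryIdx L β).getD L.length))[j]'(by
      simp [List.length_take]; omega) = L[j] := List.getElem_take
  rw [← this]
  exact List.getElem_mem _

lemma chain_split {L : List (Set Attr × Set Attr)} {β : DBAtom Rel Attr Var Const}
    {xy : Set Attr × Set Attr} (hxy : xy ∈ L) :
    xy ∈ primaryPrefix L β ∨
      ∃ i j, primaryIdx L β = some i ∧ i ≤ j ∧ ∃ (hj : j < L.length), L[j] = xy := by
  obtain ⟨j, hjL, hjeq⟩ := List.mem_iff_getElem.1 hxy
  by_cases hjk : j < (primaryIdx L β).getD L.length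
  · exact Or.inl (hjeq ▸ idx_prefix_idx hjk hjL)
  · right
    cases hidx : primaryIdx L β with
    | none => exact absurd hjL (by simp [hidx] at hjk; omega)
    | some i =>
      rw [hidx] at hjk
      exact ⟨i, j, rfl, by simpa using hjk, hjL, hjeq⟩

lemma primaryIdx_lt_length {L : List (Set Attr × Set Attr)} {β : DBAtom Rel Attr Var Const}
    {i : ℕ} (h : primaryIdx L β = some i) : i < L.length := by
  unfold primaryIdx at h
  split at h
  · next h' =>
    obtain ⟨xy, hsome, -⟩ := Nat.find_spec h'
    obtain ⟨hlt, -⟩ := List.getElem?_eq_some_iff.1 hsome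
    have hi : i = Nat.find h' := (Option.some.inj h).symm
    omega
  · exact absurd h (by simp)

lemma primaryLhs_eq {L : List (Set Attr × Set Attr)} {β : DBAtom Rel Attr Var Const}
    {i : ℕ} (h : primaryIdx L β = some i) (hi : i < L.length) :
    primaryLhs L β = (L[i]).1 := by
  unfold primaryLhs primaryFD
  rw [h]
  simp [List.getElem?_eq_getElem hi]

lemma lhs_mono {chain : Rel → List (Set Attr × Set Attr)} (hchain : canonicalChain chain)
    (R : Rel) {i j : ℕ} (hi : i < (chain R).length) (hj : j < (chain R).length)
    (hij : i ≤ j) : ((chain R)[i]).1 ⊆ ((chain R)[j]).1 := by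
  rcases eq_or_lt_of_le hij with h | h
  · subst h; exact subset_rfl
  · exact (List.pairwise_iff_getElem.1 (hchain R).1 i j hi hj h).subset

/-- The main compatibility lemma: an on-path fact `f` and a non-conflicting fact `g`
that is either off-path or differs from `f` on the primary lhs never jointly violate
an FD of the chain. -/
lemma compat_main {chain : Rel → List (Set Attr × Set Attr)} (hchain : canonicalChain chain)
    {α : DBAtom Rel Attr Var Const} {f g : DBFact Rel Attr Const}
    (hfon : ∀ xy ∈ primaryPrefix (chain α.rel) α, ∀ A ∈ xy.1 ∪ xy.2, agreesAt f α A)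
    (hgnc : ∀ xy ∈ primaryPrefix (chain α.rel) α,
      (∀ A ∈ xy.1, agreesAt g α A) → ∀ B ∈ xy.2, agreesAt g α B)
    (hcase : (∃ xy ∈ primaryPrefix (chain α.rel) α, ∃ A ∈ xy.1 ∪ xy.2, ¬ agreesAt g α A) ∨
      (∃ A ∈ primaryLhs (chain α.rel) α, f.val A ≠ g.val A)) :
    ∀ xy ∈ chain α.rel, (∀ A ∈ xy.1, f.val A = g.val A) → ∀ B ∈ xy.2, f.val B = g.val B := by
  intro xy hxy hagree B hB
  rcases chain_split (β := α) hxy with hpre | ⟨i, j, hidx, hij, hjL, hjeq⟩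
  · -- prefix FD: both agree with α
    have hgX : ∀ A ∈ xy.1, agreesAt g α A := by
      intro A hA
      have hf := hfon xy hpre A (Set.mem_union_left _ hA)
      unfold agreesAt at hf ⊢
      rw [hf, hagree A hA]
    have hgB := hgnc xy hpre hgX B hB
    have hfB := hfon xy hpre B (Set.mem_union_right _ hB)
    unfold agreesAt at hgB hfB
    rw [hfB] at hgB
    exact DBTerm.const.inj hgB
  · -- FD at or after the primary FD
    exfalso
    have hiL : i < (chain α.rel).length := primaryIdx_lt_length hidx
    have hXsub : ((chain α.rel)[i]).1 ⊆ xy.1 := by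
      have := lhs_mono hchain α.rel hiL hjL hij
      rwa [hjeq] at this
    rcases hcase with ⟨xy', hxy', A₀, hA₀, hnagree⟩ | ⟨A, hA, hne⟩
    · -- g is off-path
      obtain ⟨j', hj'k, hj'L, hj'eq⟩ := mem_prefix_idx hxy'
      have hj'i : j' < i := by rw [hidx] at hj'k; simpa using hj'k
      have hX'sub : xy'.1 ⊆ xy.1 := by
        have h1 : ((chain α.rel)[j']).1 ⊆ ((chain α.rel)[i]).1 :=
          lhs_mono hchain α.rel hj'L hiL hj'i.le
        rw [hj'eq] at h1
        exact h1.trans hXsub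
      have hgX' : ∀ A ∈ xy'.1, agreesAt g α A := by
        intro A hA
        have hf := hfon xy' hxy' A (Set.mem_union_left _ hA)
        unfold agreesAt at hf ⊢
        rw [hf, hagree A (hX'sub hA)]
      rcases hA₀ with hA₀ | hA₀
      · exact hnagree (hgX' A₀ hA₀)
      · exact hnagree (hgnc xy' hxy' hgX' A₀ hA₀)
    · -- f and g differ on the primary lhs
      rw [primaryLhs_eq hidx hiL] at hA
      exact hne (hagree A (hXsub hA))

end Compat
section Loc
variable {Rel Attr Var Const : Type*}

lemma nonconf_imp {chain : Rel → List (Set Attr × Set Attr)}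
    {Q : Finset (DBAtom Rel Attr Var Const)} {α : DBAtom Rel Attr Var Const} (hα : α ∈ Q)
    {f : DBFact Rel Attr Const} (hrel : f.rel = α.rel) (hnc : ¬ confP chain Q f) :
    ∀ xy ∈ primaryPrefix (chain α.rel) α,
      (∀ A ∈ xy.1, agreesAt f α A) → ∀ B ∈ xy.2, agreesAt f α B := by
  intro xy hxy hX B hB
  by_contra hnB
  exact hnc ⟨α, hα, hrel.symm, xy, hxy, hX, B, hB, hnB⟩

lemma not_off_imp {chain : Rel → List (Set Attr × Set Attr)}
    {α : DBAtom Rel Attr Var Const} {f : DBFact Rel Attr Const} (hrel : f.rel = α.rel)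
    (hnoff : ¬ offP chain α f) :
    ∀ xy ∈ primaryPrefix (chain α.rel) α, ∀ A ∈ xy.1 ∪ xy.2, agreesAt f α A := by
  intro xy hxy A hA
  by_contra h
  exact hnoff ⟨hrel, xy, hxy, A, hA, h⟩

/-- Entailment only depends on the part of a repair inside `W`. -/
lemma entails_iff_W {chain : Rel → List (Set Attr × Set Attr)}
    {Q : Finset (DBAtom Rel Attr Var Const)} (hsjf : sjf Q)
    {α : DBAtom Rel Attr Var Const} (hα : α ∈ Q) {E : Finset (DBFact Rel Attr Const)}
    (hErel : ∀ f ∈ E, f.rel = α.rel)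
    (h1 : ¬ entails E ({α} : Finset (DBAtom Rel Attr Var Const)))
    {F1 E' T : Finset (DBFact Rel Attr Const)} (hE' : E' ⊆ E) (hT : T ⊆ F1 ∪ E') :
    entails T Q ↔ entails (T ∩ F1.filter (fun f => ¬ offP chain α f)) Q := by
  constructor
  · rintro ⟨h, hhom⟩
    refine ⟨h, fun β hβ => ?_⟩
    have hx : applyHom h β ∈ T := hhom β hβ
    have hxF1 : applyHom h β ∈ F1 := by
      rcases Finset.mem_union.1 (hT hx) with h' | h'
      · exact h'
      · exfalso
        have hxE : applyHom h β ∈ E := hE' h'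
        have hβα : β = α := by
          refine hsjf β hβ α hα ?_
          show (applyHom h β).rel = α.rel
          exact hErel _ hxE
        apply h1
        refine ⟨h, fun γ hγ => ?_⟩
        rw [Finset.mem_singleton.1 hγ, ← hβα]
        exact hxE
    have hxnoff : ¬ offP chain α (applyHom h β) := by
      rintro ⟨hrel, xy, hxy, A, hA, hnagree⟩
      have hβα : β = α := hsjf β hβ α hα hrel
      subst hβα
      obtain ⟨c, hc⟩ := prefix_const hxy A hA
      apply hnagree
      unfold agreesAt
      simp [applyHom, hc]
    exact Finset.mem_inter.2 ⟨hx, Finset.mem_filter.2 ⟨hxF1, hxnoff⟩⟩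
  · exact entails_mono Finset.inter_subset_left

/-- Packaged cross-compatibility. -/
lemma crossOK_of {chain : Rel → List (Set Attr × Set Attr)} (hchain : canonicalChain chain)
    {Q : Finset (DBAtom Rel Attr Var Const)} {α : DBAtom Rel Attr Var Const} (hα : α ∈ Q)
    {G H : Finset (DBFact Rel Attr Const)}
    (hGon : ∀ f ∈ G, f.rel = α.rel → ¬ offP chain α f)
    (hHrel : ∀ g ∈ H, g.rel = α.rel)
    (hHnc : ∀ g ∈ H, ¬ confP chain Q g)
    (hpair : ∀ f ∈ G, ∀ g ∈ H, f.rel = α.rel →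
      (∃ xy ∈ primaryPrefix (chain α.rel) α, ∃ A ∈ xy.1 ∪ xy.2, ¬ agreesAt g α A) ∨
      (∃ A ∈ primaryLhs (chain α.rel) α, f.val A ≠ g.val A)) :
    crossOK (chainFDs chain) G H := by
  intro φ hφ f hf g hg hfr hgr hlhs A hA
  obtain ⟨xy, hxy, hl, hr⟩ := hφ
  have hφα : φ.rel = α.rel := by rw [← hgr]; exact hHrel g hg
  have hfα : f.rel = α.rel := hfr.trans hφα
  have hxy' : xy ∈ chain α.rel := by rwa [hφα] at hxy
  refine compat_main hchain (not_off_imp hfα (hGon f hf hfα))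
    (nonconf_imp hα (hHrel g hg) (hHnc g hg)) (hpair f hf g hg hfα) xy hxy' ?_ A ?_
  · rw [← hl]; exact hlhs
  · rw [← hr]; exact hA

end Loc
set_option maxHeartbeats 2000000 in
/-- For a canonical set of FDs with an LHS chain, an SJFCQ `Q`, an atom `α = R(z̄)` of
`Q`, and a set `E` of `R`-facts such that (1) the single-atom query `{α}` is not
entailed by `E` and (2) every fact of `E` disagrees with every `R`-fact of `D` on some
primary-lhs position of `α`:
`rfreq(Q, D ∪ E, Σ) = rfreq(Q,D,Σ) × (|rep(D,Σ)| / |rep(D \ D_conf,Σ)|) ×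
(|rep((D ∪ E) \ (D_conf ∪ E_conf),Σ)| / |rep(D ∪ E,Σ)|)`. -/
theorem stmt_12 {Rel Attr Var Const : Type*}
    (chain : Rel → List (Set Attr × Set Attr)) (hchain : canonicalChain chain)
    (Q : Finset (DBAtom Rel Attr Var Const)) (hQne : Q.Nonempty) (hsjf : sjf Q)
    (D E : Finset (DBFact Rel Attr Const))
    (α : DBAtom Rel Attr Var Const) (hα : α ∈ Q)
    (hErel : ∀ f ∈ E, f.rel = α.rel)
    (h1 : ¬ entails E ({α} : Finset (DBAtom Rel Attr Var Const)))
    (h2 : ∀ f ∈ E, ∀ g ∈ D, g.rel = α.rel →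
      ∃ A ∈ primaryLhs (chain α.rel) α, f.val A ≠ g.val A) :
    rfreq Q (D ∪ E) (chainFDs chain) =
      rfreq Q D (chainFDs chain) *
      (((rep D (chainFDs chain)).card : ℚ) /
        ((rep (D \ dconf chain Q D) (chainFDs chain)).card : ℚ)) *
      (((rep ((D ∪ E) \ (dconf chain Q D ∪ dconf chain Q E)) (chainFDs chain)).card : ℚ) /
        ((rep (D ∪ E) (chainFDs chain)).card : ℚ)) := by
  classical
  set S := chainFDs chain with hS
  set F1 := D \ dconf chain Q D with hF1
  set E' := E \ dconf chain Q E with hE'def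
  set W := F1.filter (fun f => ¬ offP chain α f) with hWdef
  set O1 := F1.filter (offP chain α) with hO1def
  set OnE := E'.filter (fun f => ¬ offP chain α f) with hOnEdef
  set OffE := E'.filter (offP chain α) with hOffEdef
  set X := (D ∪ E) \ (dconf chain Q D ∪ dconf chain Q E) with hXdef
  set Offs := O1 ∪ OffE with hOffsdef
  set H1 := OnE ∪ Offs with hH1def
  -- basic facts
  have hDE : ∀ f, f ∈ D → f ∈ E → False := by
    intro f hfD hfE
    obtain ⟨A, -, hne⟩ := h2 f hfE f hfD (hErel f hfE)
    exact hne rfl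
  have hF1D : F1 ⊆ D := Finset.sdiff_subset
  have hE'E : E' ⊆ E := Finset.sdiff_subset
  have hWF1 : W ⊆ F1 := Finset.filter_subset _ _
  have hO1F1 : O1 ⊆ F1 := Finset.filter_subset _ _
  have hOnEE : OnE ⊆ E' := Finset.filter_subset _ _
  have hOffEE : OffE ⊆ E' := Finset.filter_subset _ _
  -- non-conflict facts
  have hncF1 : ∀ f ∈ F1, ¬ confP chain Q f := by
    intro f hf hc
    exact (Finset.mem_sdiff.1 hf).2 (mem_dconf.2 ⟨(Finset.mem_sdiff.1 hf).1, hc⟩)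
  have hncE' : ∀ f ∈ E', ¬ confP chain Q f := by
    intro f hf hc
    exact (Finset.mem_sdiff.1 hf).2 (mem_dconf.2 ⟨(Finset.mem_sdiff.1 hf).1, hc⟩)
  -- set identities
  have hXeq : X = F1 ∪ E' := by
    ext x
    simp only [hXdef, hF1, hE'def, Finset.mem_sdiff, Finset.mem_union]
    have hdD : x ∈ dconf chain Q D → x ∈ D := fun h => (mem_dconf.1 h).1
    have hdE : x ∈ dconf chain Q E → x ∈ E := fun h => (mem_dconf.1 h).1
    constructor
    · rintro ⟨hx | hx, hnc⟩
      · exact Or.inl ⟨hx, fun h => hnc (Or.inl h)⟩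
      · exact Or.inr ⟨hx, fun h => hnc (Or.inr h)⟩
    · rintro (⟨hx, hnc⟩ | ⟨hx, hnc⟩)
      · exact ⟨Or.inl hx, fun h => h.elim hnc (fun h' => hDE x hx (hdE h'))⟩
      · exact ⟨Or.inr hx, fun h => h.elim (fun h' => hDE x (hdD h') hx) hnc⟩
  have hF1u : W ∪ O1 = F1 := by
    rw [Finset.union_comm]
    exact Finset.filter_union_filter_not_eq _ _
  have hE'u : OnE ∪ OffE = E' := by
    rw [Finset.union_comm]
    exact Finset.filter_union_filter_not_eq _ _
  have hXu : X = W ∪ H1 := by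
    rw [hXeq, ← hF1u, ← hE'u, hH1def, hOffsdef]
    ext x
    simp only [Finset.mem_union]
    tauto
  -- relation facts
  have hO1rel : ∀ g ∈ O1, g.rel = α.rel := fun g hg => (Finset.mem_filter.1 hg).2.1
  have hOffErel : ∀ g ∈ OffE, g.rel = α.rel := fun g hg => (Finset.mem_filter.1 hg).2.1
  have hOnErel : ∀ g ∈ OnE, g.rel = α.rel := fun g hg => hErel g (hE'E (hOnEE hg))
  have hH1rel : ∀ g ∈ H1, g.rel = α.rel := by
    intro g hg
    rcases Finset.mem_union.1 hg with h | h
    · exact hOnErel g h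
    rcases Finset.mem_union.1 h with h | h
    · exact hO1rel g h
    · exact hOffErel g h
  have hH1nc : ∀ g ∈ H1, ¬ confP chain Q g := by
    intro g hg
    rcases Finset.mem_union.1 hg with h | h
    · exact hncE' g (hOnEE h)
    rcases Finset.mem_union.1 h with h | h
    · exact hncF1 g (hO1F1 h)
    · exact hncE' g (hOffEE h)
  have hWon : ∀ f ∈ W, f.rel = α.rel → ¬ offP chain α f := fun f hf _ =>
    (Finset.mem_filter.1 hf).2
  -- disjointness
  have hdisj1 : Disjoint W H1 := by
    rw [Finset.disjoint_left]
    intro x hxW hxH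
    rcases Finset.mem_union.1 hxH with h | h
    · exact hDE x (hF1D (hWF1 hxW)) (hE'E (hOnEE h))
    rcases Finset.mem_union.1 h with h | h
    · exact (Finset.mem_filter.1 hxW).2 (Finset.mem_filter.1 h).2
    · exact hDE x (hF1D (hWF1 hxW)) (hE'E (hOffEE h))
  have hdisj2 : Disjoint OnE Offs := by
    rw [Finset.disjoint_left]
    intro x hxO hxF
    rcases Finset.mem_union.1 hxF with h | h
    · exact hDE x (hF1D (hO1F1 h)) (hE'E (hOnEE hxO))
    · exact (Finset.mem_filter.1 hxO).2 (Finset.mem_filter.1 h).2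
  have hdisj3 : Disjoint W O1 := by
    rw [Finset.disjoint_left]
    intro x hxW hxO
    exact (Finset.mem_filter.1 hxW).2 (Finset.mem_filter.1 hxO).2
  -- cross-compatibility
  have hoffpair : ∀ (G : Finset (DBFact Rel Attr Const)), ∀ f ∈ G,
      ∀ g ∈ O1 ∪ OffE, f.rel = α.rel →
      (∃ xy ∈ primaryPrefix (chain α.rel) α, ∃ A ∈ xy.1 ∪ xy.2, ¬ agreesAt g α A) ∨
      (∃ A ∈ primaryLhs (chain α.rel) α, f.val A ≠ g.val A) := by
    intro G f _ g hg _
    left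
    rcases Finset.mem_union.1 hg with h | h
    · exact (Finset.mem_filter.1 h).2.2
    · exact (Finset.mem_filter.1 h).2.2
  have hcross1 : crossOK S W H1 := by
    refine crossOK_of hchain hα hWon hH1rel hH1nc ?_
    intro f hf g hg hfα
    rcases Finset.mem_union.1 hg with h | h
    · right
      obtain ⟨A, hA, hne⟩ := h2 g (hE'E (hOnEE h)) f (hF1D (hWF1 hf)) hfα
      exact ⟨A, hA, fun hEq => hne hEq.symm⟩
    · exact hoffpair W f hf g h hfα
  have hcross2 : crossOK S OnE Offs := by
    refine crossOK_of hchain hα ?_ ?_ ?_ ?_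
    · exact fun f hf _ => (Finset.mem_filter.1 hf).2
    · intro g hg
      rcases Finset.mem_union.1 hg with h | h
      · exact hO1rel g h
      · exact hOffErel g h
    · intro g hg
      rcases Finset.mem_union.1 hg with h | h
      · exact hncF1 g (hO1F1 h)
      · exact hncE' g (hOffEE h)
    · exact fun f hf g hg hfα => hoffpair OnE f hf g hg hfα
  have hcross3 : crossOK S W O1 := by
    refine crossOK_of hchain hα hWon hO1rel (fun g hg => hncF1 g (hO1F1 hg)) ?_
    exact fun f hf g hg hfα => hoffpair W f hf g (Finset.mem_union_left _ hg) hfα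
  -- entailment localization
  have hPX : ∀ r ∈ rep (W ∪ H1) S, (entails r Q ↔ entails (r ∩ W) Q) := by
    intro r hr
    have hrsub : r ⊆ F1 ∪ E' := by
      refine (mem_rep_iff.1 hr).1.trans ?_
      rw [← hXu, hXeq]
    exact entails_iff_W hsjf hα hErel h1 hE'E hrsub
  have hPF1 : ∀ r ∈ rep (W ∪ O1) S, (entails r Q ↔ entails (r ∩ W) Q) := by
    intro r hr
    have hrsub : r ⊆ F1 ∪ E' := (mem_rep_iff.1 hr).1.trans
      (hF1u ▸ Finset.subset_union_left)
    exact entails_iff_W hsjf hα hErel h1 hE'E hrsub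
  -- the counting identities
  have hrepQX : repQ (D ∪ E) S Q = repQ X S Q := by
    rw [repQ_sdiff chain Q (D ∪ E), dconf_union]
  have hrepQD : repQ D S Q = repQ F1 S Q := repQ_sdiff chain Q D
  have ha : (repQ (D ∪ E) S Q).card =
      ((rep W S).filter (fun r => entails r Q)).card * (rep H1 S).card := by
    rw [hrepQX]
    show ((rep X S).filter (fun r => entails r Q)).card = _
    rw [hXu]
    exact rep_prod_filter hdisj1 hcross1 _ hPX
  have hc : (repQ D S Q).card =
      ((rep W S).filter (fun r => entails r Q)).card * (rep O1 S).card := by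
    rw [hrepQD]
    show ((rep F1 S).filter (fun r => entails r Q)).card = _
    rw [← hF1u]
    exact rep_prod_filter hdisj3 hcross3 _ hPF1
  have hfX : (rep X S).card = (rep W S).card * (rep H1 S).card := by
    rw [hXu]; exact rep_prod_card hdisj1 hcross1
  have heF1 : (rep F1 S).card = (rep W S).card * (rep O1 S).card := by
    rw [← hF1u]; exact rep_prod_card hdisj3 hcross3
  -- final algebra
  have key : ((repQ (D ∪ E) S Q).card : ℚ) * (rep F1 S).card =
      ((repQ D S Q).card : ℚ) * (rep X S).card := by
    rw [ha, hc, hfX, heF1]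
    push_cast
    ring
  have hb : ((rep (D ∪ E) S).card : ℚ) ≠ 0 := by
    exact_mod_cast (rep_card_pos (D ∪ E) S).ne'
  have hd : ((rep D S).card : ℚ) ≠ 0 := by
    exact_mod_cast (rep_card_pos D S).ne'
  have he : ((rep F1 S).card : ℚ) ≠ 0 := by
    exact_mod_cast (rep_card_pos F1 S).ne'
  have hx : ((rep X S).card : ℚ) ≠ 0 := by
    exact_mod_cast (rep_card_pos X S).ne'
  rw [rfreq, rfreq]
  field_simp
  linear_combination key
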